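/- Let N be an ordered Π-net and m, m' vectors with m' = m + W(t) for some transition t ∈ T_i with input place p₁ and output place p₂ in P_i. Then the marking witness transform satisfies m̃'(p₁) = m̃(p₁) − 1, m̃'(p₂) = m̃(p₂) + 1, and m̃'(p) = m̃(p) for all other places p. -/

import Mathlib

open Finset

/-- A transition `t` is enabled at marking `m`. -/
def enabledAt {P T : Type*} (Wm : P → T → ℕ) (m : P → ℕ) (t : T) : Prop :=
  ∀ p, Wm p t ≤ m p

/-- Firing transition `t` at marking `m`. -/
def fireAt {P T : Type*} (Wm Wp : P → T → ℕ) (m : P → ℕ) (t : T) : P → ℕ :=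
  fun p => m p - Wm p t + Wp p t

/-- One step of the reachability graph. -/
def step {P T : Type*} (Wm Wp : P → T → ℕ) (m m' : P → ℕ) : Prop :=
  ∃ t, enabledAt Wm m t ∧ m' = fireAt Wm Wp m t

/-- Reachability relation. -/
def reach {P T : Type*} (Wm Wp : P → T → ℕ) : (P → ℕ) → (P → ℕ) → Prop :=
  Relation.ReflTransGen (step Wm Wp)

/-- Input bag of a transition. -/
def preBag {P T : Type*} (Wm : P → T → ℕ) (t : T) : P → ℕ := fun p => Wm p t

/-- Output bag of a transition. -/
def postBag {P T : Type*} (Wp : P → T → ℕ) (t : T) : P → ℕ := fun p => Wp p t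

/-- The finite set of complexes of the net. -/
def complexes {P T : Type*} [Fintype P] [Fintype T] [DecidableEq P]
    (Wm Wp : P → T → ℕ) : Finset (P → ℕ) :=
  (Finset.univ.image (preBag Wm)) ∪ (Finset.univ.image (postBag Wp))

/-- `c` is a complex of the net. -/
def isComplex {P T : Type*} (Wm Wp : P → T → ℕ) (c : P → ℕ) : Prop :=
  (∃ t, c = preBag Wm t) ∨ (∃ t, c = postBag Wp t)

/-- Arc of the reaction graph. -/
def rarc {P T : Type*} (Wm Wp : P → T → ℕ) (c c' : P → ℕ) : Prop :=
  ∃ t, c = preBag Wm t ∧ c' = postBag Wp t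

/-- Weak reversibility: every connected component of the reaction graph is
strongly connected. -/
def weaklyReversible {P T : Type*} (Wm Wp : P → T → ℕ) : Prop :=
  ∀ c c', isComplex Wm Wp c → isComplex Wm Wp c' →
    Relation.ReflTransGen (fun a b => rarc Wm Wp a b ∨ rarc Wm Wp b a) c c' →
    Relation.ReflTransGen (rarc Wm Wp) c c'

/-- An `n`-level ordered Π-net.  Levels are indexed by `Fin n`, index `i`
standing for level `i+1` of the informal definition.  Every level is a
strongly connected state machine through which the transitions of that level
route exactly one token; transitions of level `i+1` may in addition consume
and produce tokens of level `i`; every level (except the lowest) is connected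
to the one below it; two transitions of a level sharing their input (resp.
output) place at that level have equal input (resp. output) bags; and the net
is weakly reversible. -/
structure OrderedPiNet (n : ℕ) (P T : Type*) [Fintype P] [Fintype T]
    [DecidableEq P] [DecidableEq T] where
  Wm : P → T → ℕ
  Wp : P → T → ℕ
  lvlP : P → Fin n
  lvlT : T → Fin n
  lvl_surj : Function.Surjective lvlP
  inPlace : T → P
  outPlace : T → P
  inPlace_lvl : ∀ t, lvlP (inPlace t) = lvlT t
  outPlace_lvl : ∀ t, lvlP (outPlace t) = lvlT t
  Wm_in : ∀ t, Wm (inPlace t) t = 1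
  Wp_out : ∀ t, Wp (outPlace t) t = 1
  Wm_own : ∀ t p, lvlP p = lvlT t → p ≠ inPlace t → Wm p t = 0
  Wp_own : ∀ t p, lvlP p = lvlT t → p ≠ outPlace t → Wp p t = 0
  Wm_below : ∀ t p, Wm p t ≠ 0 → lvlP p = lvlT t ∨ (lvlP p : ℕ) + 1 = (lvlT t : ℕ)
  Wp_below : ∀ t p, Wp p t ≠ 0 → lvlP p = lvlT t ∨ (lvlP p : ℕ) + 1 = (lvlT t : ℕ)
  connected_below : ∀ i : Fin n, (i : ℕ) ≠ 0 →
    ∃ t p, lvlT t = i ∧ (lvlP p : ℕ) + 1 = (i : ℕ) ∧ Wm p t ≠ 0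
  sameIn : ∀ t t', inPlace t = inPlace t' → ∀ p, Wm p t = Wm p t'
  sameOut : ∀ t t', outPlace t = outPlace t' → ∀ p, Wp p t = Wp p t'
  strong : ∀ p q, lvlP p = lvlP q →
    Relation.ReflTransGen (fun a b => ∃ t, inPlace t = a ∧ outPlace t = b) p q
  wr : weaklyReversible Wm Wp

namespace OrderedPiNet

variable {n : ℕ} {P T : Type*} [Fintype P] [Fintype T] [DecidableEq P] [DecidableEq T]

/-- The potential `pot(p, q)`: the number of tokens `t•(q)` put in `q` by a
common input transition `t` of `p` and `q`, when `q` is one level below `p`,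
and `0` otherwise. -/
noncomputable def pot (N : OrderedPiNet n P T) (p q : P) : ℕ :=
  if h : ((N.lvlP q : ℕ) + 1 = (N.lvlP p : ℕ)) ∧ ∃ t, N.outPlace t = p ∧ N.Wp q t ≠ 0
  then N.Wp q h.2.choose else 0

/-- The potential of a place: `pot(p) = ∑_{q} pot(p, q)`. -/
noncomputable def potT (N : OrderedPiNet n P T) (p : P) : ℕ := ∑ q, N.pot p q

/-- The marking witness transform `m ↦ m̃`:
`m̃(p) = m(p) − ∑_{r one level above p} m̃(r) · pot(r, p)`. -/
noncomputable def mw (N : OrderedPiNet n P T) (m : P → ℤ) (p : P) : ℤ :=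
  m p - ∑ r : P, (if h : (N.lvlP p : ℕ) + 1 = (N.lvlP r : ℕ)
    then N.mw m r * (N.pot r p : ℤ) else 0)
termination_by n - (N.lvlP p : ℕ)
decreasing_by
  have h1 : (N.lvlP r : ℕ) < n := (N.lvlP r).isLt
  omega

/-- The row `v_i` of S-invariants applied to a vector: `v_i · x = ∑_{p ∈ P_i} x̃(p)`. -/
noncomputable def vRow (N : OrderedPiNet n P T) (i : Fin n) (x : P → ℤ) : ℤ :=
  ∑ p ∈ Finset.univ.filter (fun p => N.lvlP p = i), N.mw x p

/-- Number of tokens of `m` in `P_i`. -/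
def lvlCount (N : OrderedPiNet n P T) (i : Fin n) (m : P → ℕ) : ℕ :=
  ∑ p ∈ Finset.univ.filter (fun p => N.lvlP p = i), m p

/-- Number of tokens of `m` in `P_{i−1}` (the level just below `i`). -/
def belowCount (N : OrderedPiNet n P T) (i : Fin n) (m : P → ℕ) : ℕ :=
  ∑ p ∈ Finset.univ.filter (fun p => (N.lvlP p : ℕ) + 1 = (i : ℕ)), m p

/-- The level-`i` minimal marked potential `φ_i(m)`. -/
noncomputable def phi (N : OrderedPiNet n P T) (i : Fin n) (m : P → ℕ) : ℕ :=
  if N.lvlCount i m = 0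
  then (Finset.univ.filter (fun p => N.lvlP p = i)).sup N.potT
  else sInf (N.potT '' {p | N.lvlP p = i ∧ m p ≠ 0})

/-- The Π³ condition: every interface place has maximal potential on its level. -/
def isPi3 (N : OrderedPiNet n P T) : Prop :=
  ∀ p t, (N.lvlP p : ℕ) + 1 = (N.lvlT t : ℕ) → N.Wp p t ≠ 0 →
    ∀ q, N.lvlP q = N.lvlP p → N.potT q ≤ N.potT p

/-- One step using only transitions of level index at most `i`. -/
def stepUpTo (N : OrderedPiNet n P T) (i : Fin n) (m m' : P → ℕ) : Prop :=
  ∃ t, N.lvlT t ≤ i ∧ enabledAt N.Wm m t ∧ m' = fireAt N.Wm N.Wp m t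

/-- Reachability using only transitions of level index at most `i` (the set `R_i`). -/
def reachUpTo (N : OrderedPiNet n P T) (i : Fin n) : (P → ℕ) → (P → ℕ) → Prop :=
  Relation.ReflTransGen (N.stepUpTo i)

/-- `i`-liveness. -/
def iLive (N : OrderedPiNet n P T) (i : Fin n) (m : P → ℕ) : Prop :=
  ∀ t, N.lvlT t ≤ i → ∃ m', N.reachUpTo i m m' ∧ enabledAt N.Wm m' t

/-- The `i`-condition: `m(P_i) > 0` and `m(P_{j−1}) ≥ φ_j(m)` for all levels
`j` with `2 ≤ j ≤ i` (in 1-based numbering). -/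
def iCond (N : OrderedPiNet n P T) (i : Fin n) (m : P → ℕ) : Prop :=
  N.lvlCount i m ≠ 0 ∧
  ∀ j : Fin n, 1 ≤ (j : ℕ) → j ≤ i → N.phi j m ≤ N.belowCount j m

end OrderedPiNet

/-
The transform `m ↦ m̃` is additive, so it suffices to compute `W(t)~`.  It is
`e_{p₂} − e_{p₁}`: on the level of `t` this is `W(t)` itself, one level below the
corrections `pot(p₂, ·) − pot(p₁, ·)` cancel `t•` and `•t`, because `pot(p₂, q) = t•(q)`
and, by weak reversibility, some transition `s` has `s• = •t` and output place `p₁`,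
whence `pot(p₁, q) = •t(q)`; on all other levels both `W(t)` and the correction vanish.
-/

lemma weaklyReversible.exists_postBag_eq_preBag {P T : Type*} {Wm Wp : P → T → ℕ}
    (hwr : weaklyReversible Wm Wp) (t : T) : ∃ s, postBag Wp s = preBag Wm t := by
  have hpath := hwr _ _ (Or.inr ⟨t, rfl⟩) (Or.inl ⟨t, rfl⟩)
    (Relation.ReflTransGen.single (Or.inr ⟨t, rfl, rfl⟩))
  rcases hpath.cases_tail with heq | ⟨_, -, s, -, hs⟩
  · exact ⟨t, heq.symm⟩
  · exact ⟨s, hs.symm⟩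

namespace OrderedPiNet

variable {n : ℕ} {P T : Type*} [Fintype P] [Fintype T] [DecidableEq P] [DecidableEq T]
  (N : OrderedPiNet n P T)

/-- The column `W(t) = t• − •t` of the incidence matrix. -/
def incidence (t : T) (p : P) : ℤ := (N.Wp p t : ℤ) - N.Wm p t

lemma Wm_of_lvlP_eq {t : T} {p : P} (h : N.lvlP p = N.lvlT t) :
    N.Wm p t = if p = N.inPlace t then 1 else 0 := by
  split_ifs with hp
  · rw [hp, N.Wm_in]
  · exact N.Wm_own t p h hp

lemma Wp_of_lvlP_eq {t : T} {p : P} (h : N.lvlP p = N.lvlT t) :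
    N.Wp p t = if p = N.outPlace t then 1 else 0 := by
  split_ifs with hp
  · rw [hp, N.Wp_out]
  · exact N.Wp_own t p h hp

lemma Wm_eq_zero {t : T} {p : P} (h₁ : N.lvlP p ≠ N.lvlT t)
    (h₂ : (N.lvlP p : ℕ) + 1 ≠ N.lvlT t) : N.Wm p t = 0 := by
  by_contra h
  exact (N.Wm_below t p h).elim h₁ h₂

lemma Wp_eq_zero {t : T} {p : P} (h₁ : N.lvlP p ≠ N.lvlT t)
    (h₂ : (N.lvlP p : ℕ) + 1 ≠ N.lvlT t) : N.Wp p t = 0 := by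
  by_contra h
  exact (N.Wp_below t p h).elim h₁ h₂

lemma pot_outPlace {s : T} {p : P} (h : (N.lvlP p : ℕ) + 1 = N.lvlT s) :
    N.pot (N.outPlace s) p = N.Wp p s := by
  rw [pot]
  split_ifs with hc
  · exact N.sameOut _ s hc.2.choose_spec.1 p
  · by_contra hne
    exact hc ⟨by rw [N.outPlace_lvl]; exact h, s, rfl, Ne.symm hne⟩

lemma exists_reverse (t : T) :
    ∃ s, N.outPlace s = N.inPlace t ∧ ∀ q, N.Wp q s = N.Wm q t := by
  obtain ⟨s, hs⟩ := N.wr.exists_postBag_eq_preBag t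
  have hW (q : P) : N.Wp q s = N.Wm q t := congrFun hs q
  refine ⟨s, ?_, hW⟩
  have hin : N.Wp (N.inPlace t) s = 1 := by rw [hW, N.Wm_in]
  have hout : N.Wm (N.outPlace s) t = 1 := by rw [← hW, N.Wp_out]
  have e₁ := congrArg Fin.val (N.inPlace_lvl t)
  have e₂ := congrArg Fin.val (N.outPlace_lvl s)
  -- `p₁ ∈ s•` and `outPlace s ∈ •t` force `s` and `t` onto the same level, where the only
  -- place of `s•` is `outPlace s`.
  rcases N.Wp_below s _ (by rw [hin]; exact one_ne_zero) with hl | hl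
  · by_contra hne
    have := N.Wp_own s _ hl (Ne.symm hne)
    omega
  · rcases N.Wm_below t _ (by rw [hout]; exact one_ne_zero) with hl' | hl'
    · have := congrArg Fin.val hl'
      omega
    · omega

lemma pot_inPlace {t : T} {p : P} (h : (N.lvlP p : ℕ) + 1 = N.lvlT t) :
    N.pot (N.inPlace t) p = N.Wm p t := by
  obtain ⟨s, hs, hW⟩ := N.exists_reverse t
  have hlvl : N.lvlT s = N.lvlT t := by rw [← N.outPlace_lvl, hs, N.inPlace_lvl]
  rw [← hs, N.pot_outPlace (by rw [hlvl]; exact h), hW]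

lemma mw_eq (m : P → ℤ) (p : P) :
    N.mw m p = m p - ∑ r, if (N.lvlP p : ℕ) + 1 = N.lvlP r then N.mw m r * N.pot r p else 0 := by
  rw [mw]
  simp only [dite_eq_ite]

lemma eq_mw_of_forall_eq {m f : P → ℤ}
    (hf : ∀ p, f p = m p - ∑ r, if (N.lvlP p : ℕ) + 1 = N.lvlP r then f r * N.pot r p else 0) :
    f = N.mw m := by
  suffices h : ∀ k p, n - (N.lvlP p : ℕ) ≤ k → f p = N.mw m p from
    funext fun p => h n p (Nat.sub_le _ _)
  intro k
  induction k with
  | zero => intro p hp; have := (N.lvlP p).isLt; omega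
  | succ k ih =>
    intro p hp
    rw [hf p, N.mw_eq m p]
    congr 1
    refine Finset.sum_congr rfl fun r _ => ?_
    split_ifs with hr
    · rw [ih r (by omega)]
    · rfl

lemma mw_add (a b : P → ℤ) : N.mw (a + b) = N.mw a + N.mw b := by
  refine (N.eq_mw_of_forall_eq fun p => ?_).symm
  rw [Pi.add_apply, Pi.add_apply, N.mw_eq a p, N.mw_eq b p]
  have hsplit (r : P) :
      (if (N.lvlP p : ℕ) + 1 = N.lvlP r then (N.mw a + N.mw b) r * N.pot r p else 0) =
        (if (N.lvlP p : ℕ) + 1 = N.lvlP r then N.mw a r * N.pot r p else 0) +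
          (if (N.lvlP p : ℕ) + 1 = N.lvlP r then N.mw b r * N.pot r p else 0) := by
    split_ifs <;> simp [add_mul]
  rw [Finset.sum_congr rfl fun r _ => hsplit r, Finset.sum_add_distrib]
  ring

lemma single_sub_single_apply (t : T) (p : P) :
    (Pi.single (N.outPlace t) 1 - Pi.single (N.inPlace t) 1 : P → ℤ) p =
      if (N.lvlP p : ℕ) + 1 = N.lvlT t then 0 else N.incidence t p := by
  have e₁ := N.inPlace_lvl t
  have e₂ := N.outPlace_lvl t
  by_cases hbelow : (N.lvlP p : ℕ) + 1 = N.lvlT t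
  · have h₁ : p ≠ N.inPlace t := by rintro rfl; omega
    have h₂ : p ≠ N.outPlace t := by rintro rfl; omega
    simp [hbelow, h₁, h₂]
  · by_cases hlvl : N.lvlP p = N.lvlT t
    · simp [hbelow, incidence, N.Wm_of_lvlP_eq hlvl, N.Wp_of_lvlP_eq hlvl, Pi.single_apply]
    · have h₁ : p ≠ N.inPlace t := by rintro rfl; exact hlvl e₁
      have h₂ : p ≠ N.outPlace t := by rintro rfl; exact hlvl e₂
      simp [hbelow, h₁, h₂, incidence, N.Wm_eq_zero hlvl hbelow, N.Wp_eq_zero hlvl hbelow]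

lemma sum_single_sub_single_mul_pot (t : T) (p : P) :
    (∑ r, if (N.lvlP p : ℕ) + 1 = N.lvlP r then
        (Pi.single (N.outPlace t) 1 - Pi.single (N.inPlace t) 1 : P → ℤ) r * N.pot r p
      else 0) =
      if (N.lvlP p : ℕ) + 1 = N.lvlT t then N.incidence t p else 0 := by
  have hfactor (r : P) :
      (if (N.lvlP p : ℕ) + 1 = N.lvlP r then
        (Pi.single (N.outPlace t) 1 - Pi.single (N.inPlace t) 1 : P → ℤ) r * N.pot r p
      else 0) =
        (Pi.single (N.outPlace t) 1 - Pi.single (N.inPlace t) 1 : P → ℤ) r *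
          if (N.lvlP p : ℕ) + 1 = N.lvlP r then (N.pot r p : ℤ) else 0 := by
    rw [mul_ite, mul_zero]
  rw [Finset.sum_congr rfl fun r _ => hfactor r]
  simp only [Pi.sub_apply, Pi.single_apply, sub_mul,
    ite_mul, one_mul, zero_mul, Finset.sum_sub_distrib, Finset.sum_ite_eq', Finset.mem_univ,
    if_true, N.outPlace_lvl, N.inPlace_lvl]
  split_ifs with h
  · rw [N.pot_outPlace h, N.pot_inPlace h, incidence]
  · exact sub_zero _

lemma mw_incidence (t : T) :
    N.mw (N.incidence t) = Pi.single (N.outPlace t) 1 - Pi.single (N.inPlace t) 1 := by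
  refine (N.eq_mw_of_forall_eq fun p => ?_).symm
  rw [N.single_sub_single_apply, N.sum_single_sub_single_mul_pot]
  split_ifs <;> ring

end OrderedPiNet

/-- Behaviour of the marking witness transform under firing: if
`m' = m + W(t)` for a transition `t` with distinct input place `p₁` and output
place `p₂` at its own level, then `m̃'` equals `m̃` except that it decreases by
one at `p₁` and increases by one at `p₂`. -/
theorem stmt12 {n : ℕ} {P T : Type*} [Fintype P] [Fintype T] [DecidableEq P]
    [DecidableEq T] (N : OrderedPiNet n P T) (t : T)
    (hio : N.inPlace t ≠ N.outPlace t) (m m' : P → ℤ)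
    (hm' : ∀ p, m' p = m p + ((N.Wp p t : ℤ) - (N.Wm p t : ℤ))) :
    N.mw m' (N.inPlace t) = N.mw m (N.inPlace t) - 1 ∧
    N.mw m' (N.outPlace t) = N.mw m (N.outPlace t) + 1 ∧
    ∀ p, p ≠ N.inPlace t → p ≠ N.outPlace t → N.mw m' p = N.mw m p := by
  have hm : m' = m + N.incidence t := funext hm'
  have hmw : N.mw m' = N.mw m + (Pi.single (N.outPlace t) 1 - Pi.single (N.inPlace t) 1) := by
    rw [hm, N.mw_add, N.mw_incidence]
  refine ⟨?_, ?_, fun p h₁ h₂ => ?_⟩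
  · simp [hmw, hio, sub_eq_add_neg]
  · simp [hmw, hio.symm]
  · simp [hmw, h₁, h₂]
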